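/- arXiv:2605.30004 — 2 statements merged into one kernel-verified Lean document; each statement's English description precedes it below -/
import Mathlib

section
/- Let σ_w, σ_n, σ_wn be positive reals with σ_wn < (σ_w + σ_n)/2, and let a ∈ (0,1). Then the function x ↦ σ_w·H_a^0(x) + σ_n·H_{1−a}^0(1 − x) − (σ_wn/2)·x^2 is strictly convex on the interval (0,1). -/
/-- `H_a^1` : the secant slope of `F x = x * log x` at `a`, extended continuously at `x = a`. -/
noncomputable def Hone (a t : ℝ) : ℝ :=
  if t = a then Real.log a + 1 else (t * Real.log t - a * Real.log a) / (t - a)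

/-- `H_a^0(x) = ∫_a^x H_a^1(t) dt`. -/
noncomputable def Hzero (a x : ℝ) : ℝ := ∫ t in a..x, Hone a t

/-! With `F x = x * log x`, `Hone a` is the `dslope` of `F` at `a`. Since `F'' x = 1 / x ≥ 1` on
`(0, 1]`, the function `F x - x ^ 2 / 2` is convex there, and slopes of a convex function through a
fixed point increase; hence `t ↦ H_a^1(t) - t / 2` is monotone on `(0, 1]`. The derivative
`σ_w H_a^1(x) - σ_n H_{1-a}^1(1 - x) - σ_wn x` of the energy therefore grows at rate at least
`(σ_w + σ_n) / 2 - σ_wn > 0`, so the energy is strictly convex. -/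

open Set Real

theorem ConvexOn.monotoneOn_dslope {S : Set ℝ} {f : ℝ → ℝ} {a : ℝ} (hf : ConvexOn ℝ S f)
    (ha : a ∈ S) (hfa : DifferentiableAt ℝ f a) : MonotoneOn (dslope f a) S := by
  intro x hx y hy hxy
  rcases hxy.eq_or_lt with rfl | hlt
  · exact le_rfl
  by_cases hxa : x = a
  · subst hxa
    rw [dslope_same, dslope_of_ne f hlt.ne']
    exact hf.deriv_le_slope hx hy hlt hfa
  by_cases hya : y = a
  · subst hya
    rw [dslope_same, dslope_of_ne f hxa, slope_comm]
    exact hf.slope_le_deriv hx hy hlt hfa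
  rw [dslope_of_ne f hxa, dslope_of_ne f hya]
  exact hf.slope_mono ha ⟨hx, hxa⟩ ⟨hy, hya⟩ hlt.le

theorem Hone_eq_dslope {a : ℝ} (ha : a ≠ 0) : Hone a = dslope (fun x => x * log x) a := by
  funext t
  by_cases hta : t = a
  · subst hta
    simp [Hone, dslope_same, deriv_mul_log ha]
  · simp [Hone, hta, dslope_of_ne _ hta, slope_def_field]

theorem continuousAt_Hone {a x : ℝ} (ha : 0 < a) (hx : 0 < x) : ContinuousAt (Hone a) x := by
  rw [Hone_eq_dslope ha.ne']
  rcases eq_or_ne x a with rfl | hxa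
  · exact continuousAt_dslope_same.2 (hasDerivAt_mul_log hx.ne').differentiableAt
  · exact (continuousAt_dslope_of_ne hxa).2
      (continuousAt_id.mul (continuousAt_log hx.ne'))

theorem hasDerivAt_Hzero {a x : ℝ} (ha : 0 < a) (hx : 0 < x) :
    HasDerivAt (Hzero a) (Hone a x) x := by
  have hcont : ContinuousOn (Hone a) (Ioi 0) := fun y hy =>
    (continuousAt_Hone ha hy).continuousWithinAt
  exact intervalIntegral.integral_hasDerivAt_right
    ((hcont.mono (ordConnected_Ioi.uIcc_subset ha hx)).intervalIntegrable)
    (hcont.stronglyMeasurableAtFilter isOpen_Ioi x hx) (continuousAt_Hone ha hx)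

theorem monotoneOn_log_sub_self : MonotoneOn (fun x => log x - x) (Ioc 0 1) := by
  intro x hx y hy hxy
  have hlog : log x - log y ≤ x / y - 1 := by
    rw [← log_div hx.1.ne' hy.1.ne']
    exact log_le_sub_one_of_pos (div_pos hx.1 hy.1)
  have hdiv : x / y - 1 ≤ x - y := by
    rw [div_sub_one hy.1.ne', div_le_iff₀ hy.1]
    nlinarith [hy.2]
  show log x - x ≤ log y - y
  linarith

theorem hasDerivAt_mul_log_sub_sq_div_two {x : ℝ} (hx : x ≠ 0) :
    HasDerivAt (fun x => x * log x - x ^ 2 / 2) (log x + 1 - x) x := by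
  exact ((hasDerivAt_mul_log hx).fun_sub ((hasDerivAt_pow 2 x).div_const 2)).congr_deriv
    (by norm_num)

theorem convexOn_mul_log_sub_sq_div_two :
    ConvexOn ℝ (Ioc 0 1) (fun x => x * log x - x ^ 2 / 2) := by
  have hderiv : ∀ x ∈ Ioo (0 : ℝ) 1,
      HasDerivAt (fun x => x * log x - x ^ 2 / 2) (log x + 1 - x) x := fun x hx =>
    hasDerivAt_mul_log_sub_sq_div_two hx.1.ne'
  refine MonotoneOn.convexOn_of_deriv (convex_Ioc 0 1) (fun x hx => ?_) ?_ ?_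
  · exact (hasDerivAt_mul_log_sub_sq_div_two hx.1.ne').continuousAt.continuousWithinAt
  · rw [interior_Ioc]
    exact fun x hx => (hderiv x hx).differentiableAt.differentiableWithinAt
  · rw [interior_Ioc]
    intro x hx y hy hxy
    rw [(hderiv x hx).deriv, (hderiv y hy).deriv]
    linarith [monotoneOn_log_sub_self (Ioo_subset_Ioc_self hx) (Ioo_subset_Ioc_self hy) hxy]

theorem Hone_sub_half_eq_dslope {a : ℝ} (ha : a ≠ 0) (t : ℝ) :
    Hone a t - t / 2 = dslope (fun x => x * log x - x ^ 2 / 2) a t + a / 2 := by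
  by_cases hta : t = a
  · subst hta
    rw [dslope_same, (hasDerivAt_mul_log_sub_sq_div_two ha).deriv]
    rw [Hone, if_pos rfl]
    ring
  · have hne : t - a ≠ 0 := sub_ne_zero.2 hta
    rw [dslope_of_ne _ hta, slope_def_field]
    simp only [Hone, if_neg hta]
    field_simp
    ring

theorem monotoneOn_Hone_sub_half {a : ℝ} (ha : a ∈ Ioc 0 1) :
    MonotoneOn (fun t => Hone a t - t / 2) (Ioc 0 1) := by
  intro x hx y hy hxy
  simp only [Hone_sub_half_eq_dslope ha.1.ne']
  gcongr
  exact convexOn_mul_log_sub_sq_div_two.monotoneOn_dslope ha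
    (hasDerivAt_mul_log_sub_sq_div_two ha.1.ne').differentiableAt hx hy hxy

theorem stmt4_general (σw σn σwn : ℝ) (hσw : 0 < σw) (hσn : 0 < σn)
    (hcond : σwn < (σw + σn) / 2) (a : ℝ) (ha : a ∈ Set.Ioo (0 : ℝ) 1) :
    StrictConvexOn ℝ (Set.Ioo (0 : ℝ) 1)
      (fun x => σw * Hzero a x + σn * Hzero (1 - a) (1 - x) - σwn / 2 * x ^ 2) := by
  obtain ⟨ha0, ha1⟩ := ha
  set g := fun x => σw * Hone a x - σn * Hone (1 - a) (1 - x) - σwn * x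
  have hderiv : ∀ x ∈ Ioo (0 : ℝ) 1, HasDerivAt
      (fun x => σw * Hzero a x + σn * Hzero (1 - a) (1 - x) - σwn / 2 * x ^ 2) (g x) x := by
    intro x hx
    have hreflect := (hasDerivAt_Hzero (sub_pos.2 ha1) (sub_pos.2 hx.2)).comp x
      ((hasDerivAt_id x).const_sub 1)
    refine ((((hasDerivAt_Hzero ha0 hx.1).const_mul σw).fun_add
      (hreflect.const_mul σn)).fun_sub ((hasDerivAt_pow 2 x).const_mul (σwn / 2))).congr_deriv ?_
    simp only [g]
    ring
  have hg : StrictMonoOn g (Ioo 0 1) := by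
    intro x hx y hy hxy
    have hw := monotoneOn_Hone_sub_half ⟨ha0, ha1.le⟩ (Ioo_subset_Ioc_self hx)
      (Ioo_subset_Ioc_self hy) hxy.le
    have hn := monotoneOn_Hone_sub_half (a := 1 - a) ⟨sub_pos.2 ha1, by linarith⟩
      ⟨sub_pos.2 hy.2, by linarith [hy.1]⟩ ⟨sub_pos.2 hx.2, by linarith [hx.1]⟩ (by linarith)
    simp only [g]
    linarith [mul_le_mul_of_nonneg_left hw hσw.le, mul_le_mul_of_nonneg_left hn hσn.le,
      mul_pos (sub_pos.2 hcond) (sub_pos.2 hxy)]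
  refine StrictMonoOn.strictConvexOn_of_deriv (convex_Ioo 0 1)
    (fun x hx => (hderiv x hx).continuousAt.continuousWithinAt) ?_
  rw [interior_Ioo]
  intro x hx y hy hxy
  rw [(hderiv x hx).deriv, (hderiv y hy).deriv]
  exact hg hx hy hxy

/-- If the positive energy parameters satisfy `σ_wn < (σ_w + σ_n)/2`, then for `a ∈ (0,1)`
the function `x ↦ σ_w H_a^0(x) + σ_n H_{1-a}^0(1-x) - (σ_wn/2) x^2`
is strictly convex on `(0,1)`. -/
theorem stmt4 (σw σn σwn : ℝ) (hσw : 0 < σw) (hσn : 0 < σn) (hσwn : 0 < σwn)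
    (hcond : σwn < (σw + σn) / 2) (a : ℝ) (ha : a ∈ Set.Ioo (0 : ℝ) 1) :
    StrictConvexOn ℝ (Set.Ioo (0 : ℝ) 1)
      (fun x => σw * Hzero a x + σn * Hzero (1 - a) (1 - x) - σwn / 2 * x ^ 2) :=
  stmt4_general σw σn σwn hσw hσn hcond a ha
end

section
/- Let N ≥ 1, σ_w, σ_n, σ_wn > 0, Δt > 0, let φ ∈ ℝ^N with φ_i > 0 for all i, and let A_w, A_n be symmetric positive-semidefinite real N×N matrices. Let s, s' ∈ ℝ^N with 0 < s_i < 1, 0 < s'_i < 1 and s'_i ≠ s_i for all i, let p ∈ ℝ^N, and with H(x, y) = (x·ln x − y·ln y)/(x − y) define μ_w, μ_n ∈ ℝ^N by μ_{w,i} = σ_w·(H(s'_i, s_i) − 1) + σ_wn·(1 − (s_i + s'_i)/2) + Δt·(ln s'_i − ln s_i) and μ_{n,i} = σ_n·(H(1 − s'_i, 1 − s_i) − 1) + σ_wn·(s_i + s'_i)/2 + Δt·(ln(1 − s'_i) − ln(1 − s_i)). Assume the second-order scheme relations hold: for every i, φ_i·(s'_i − s_i)/Δt = −(A_w(p + μ_w))_i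 and φ_i·((1 − s'_i) − (1 − s_i))/Δt = −(A_n(p + μ_n))_i. Then, with F(s) = σ_w·s·(ln s − 1) + σ_n·(1 − s)·(ln(1 − s) − 1) + σ_wn·s·(1 − s), the discrete energy E(v) = Σ_i φ_i·F(v_i) satisfies (E(s') − E(s))/Δt ≤ −(p + μ_w)ᵀ A_w (p + μ_w) − (p + μ_n)ᵀ A_n (p + μ_n) ≤ 0. -/
/- The secant quotient `Hsec` is exactly what makes the scheme reproduce the increment of the
entropic part `x (log x - 1)` of the free energy, and the midpoint `(s + s') / 2` does the same
for the quadratic mixing part; so in each cell the energy increment equals the flux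
`s' - s` (resp. `(1 - s') - (1 - s)`) times the chemical potential without its `Δt log` term.
That term only adds `Δt (s' - s)(log s' - log s) ≥ 0`, as `log` is monotone. Weighting by `φ`
and using the scheme, the `p` contributions cancel because the two saturations sum to one, and
what remains is `-Δt` times the two quadratic forms of the positive semidefinite matrices. -/

noncomputable def Hsec (x y : ℝ) : ℝ := (x * Real.log x - y * Real.log y) / (x - y)

open Finset Matrix

noncomputable def freeEnergyDensity (σw σn σwn x : ℝ) : ℝ :=
  σw * x * (Real.log x - 1) + σn * (1 - x) * (Real.log (1 - x) - 1) + σwn * x * (1 - x)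

lemma sub_mul_Hsec {x y : ℝ} (h : x ≠ y) :
    (x - y) * Hsec x y = x * Real.log x - y * Real.log y := by
  unfold Hsec
  field_simp [sub_ne_zero.mpr h]

lemma freeEnergyDensity_sub (σw σn σwn : ℝ) {x' x : ℝ} (hne : x' ≠ x) :
    freeEnergyDensity σw σn σwn x' - freeEnergyDensity σw σn σwn x
      = (x' - x) * (σw * (Hsec x' x - 1) + σwn * (1 - (x + x') / 2))
        + ((1 - x') - (1 - x)) * (σn * (Hsec (1 - x') (1 - x) - 1) + σwn * ((x + x') / 2)) := by
  have hw := sub_mul_Hsec hne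
  have hn := sub_mul_Hsec (x := 1 - x') (y := 1 - x) (by contrapose! hne; linarith)
  unfold freeEnergyDensity
  linear_combination -σw * hw - σn * hn

lemma sub_mul_log_sub_log_nonneg {x y : ℝ} (hx : 0 < x) (hy : 0 < y) :
    0 ≤ (x - y) * (Real.log x - Real.log y) := by
  rw [mul_comm]
  exact (monovaryOn_id_iff.2 Real.strictMonoOn_log.monotoneOn).sub_mul_sub_nonneg
    (Set.mem_Ioi.2 hy) (Set.mem_Ioi.2 hx)

lemma freeEnergyDensity_sub_le (σw σn σwn : ℝ) {Δt : ℝ} (hΔt : 0 ≤ Δt) {x' x : ℝ}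
    (hx' : x' ∈ Set.Ioo (0 : ℝ) 1) (hx : x ∈ Set.Ioo (0 : ℝ) 1) (hne : x' ≠ x) :
    freeEnergyDensity σw σn σwn x' - freeEnergyDensity σw σn σwn x
      ≤ (x' - x) * (σw * (Hsec x' x - 1) + σwn * (1 - (x + x') / 2)
            + Δt * (Real.log x' - Real.log x))
        + ((1 - x') - (1 - x)) * (σn * (Hsec (1 - x') (1 - x) - 1) + σwn * ((x + x') / 2)
            + Δt * (Real.log (1 - x') - Real.log (1 - x))) := by
  have hw := mul_nonneg hΔt (sub_mul_log_sub_log_nonneg hx'.1 hx.1)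
  have hn := mul_nonneg hΔt (sub_mul_log_sub_log_nonneg (sub_pos.2 hx'.2) (sub_pos.2 hx.2))
  rw [freeEnergyDensity_sub σw σn σwn hne]
  linarith

lemma sum_flux_mul_potential_eq {ι : Type*} [Fintype ι] (Δt : ℝ) (φ s s' p μw μn : ι → ℝ)
    (Aw An : Matrix ι ι ℝ)
    (hw : ∀ i, φ i * (s' i - s i) / Δt = -(Aw *ᵥ (p + μw)) i)
    (hn : ∀ i, φ i * ((1 - s' i) - (1 - s i)) / Δt = -(An *ᵥ (p + μn)) i) :
    ∑ i, φ i * ((s' i - s i) * μw i + ((1 - s' i) - (1 - s i)) * μn i) / Δt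
      = -((p + μw) ⬝ᵥ (Aw *ᵥ (p + μw))) - (p + μn) ⬝ᵥ (An *ᵥ (p + μn)) := by
  simp only [dotProduct, ← sum_neg_distrib, ← sum_sub_distrib, Pi.add_apply]
  refine sum_congr rfl fun i _ => ?_
  linear_combination (p i + μw i) * hw i + (p i + μn i) * hn i

theorem stmt14_general (N : ℕ) (σw σn σwn Δt : ℝ)
    (hΔt : 0 < Δt)
    (φ : Fin N → ℝ) (hφ : ∀ i, 0 < φ i)
    (Aw An : Matrix (Fin N) (Fin N) ℝ) (hAw : Aw.PosSemidef) (hAn : An.PosSemidef)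
    (s s' p : Fin N → ℝ)
    (hs : ∀ i, s i ∈ Set.Ioo (0 : ℝ) 1) (hs' : ∀ i, s' i ∈ Set.Ioo (0 : ℝ) 1)
    (hne : ∀ i, s' i ≠ s i)
    (μw μn : Fin N → ℝ)
    (hμw : ∀ i, μw i = σw * (Hsec (s' i) (s i) - 1) + σwn * (1 - (s i + s' i) / 2)
      + Δt * (Real.log (s' i) - Real.log (s i)))
    (hμn : ∀ i, μn i = σn * (Hsec (1 - s' i) (1 - s i) - 1) + σwn * ((s i + s' i) / 2)
      + Δt * (Real.log (1 - s' i) - Real.log (1 - s i)))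
    (hschemew : ∀ i, φ i * (s' i - s i) / Δt = -(Aw.mulVec (p + μw)) i)
    (hschemen : ∀ i, φ i * ((1 - s' i) - (1 - s i)) / Δt = -(An.mulVec (p + μn)) i) :
    let F : ℝ → ℝ := fun x => σw * x * (Real.log x - 1) +
      σn * (1 - x) * (Real.log (1 - x) - 1) + σwn * x * (1 - x)
    let E : (Fin N → ℝ) → ℝ := fun v => ∑ i, φ i * F (v i)
    (E s' - E s) / Δt ≤
        -dotProduct (p + μw) (Aw.mulVec (p + μw))
          - dotProduct (p + μn) (An.mulVec (p + μn)) ∧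
      -dotProduct (p + μw) (Aw.mulVec (p + μw))
          - dotProduct (p + μn) (An.mulVec (p + μn)) ≤ 0 := by
  intro F E
  have hw := hAw.dotProduct_mulVec_nonneg (p + μw)
  have hn := hAn.dotProduct_mulVec_nonneg (p + μn)
  simp only [star_trivial] at hw hn
  refine ⟨?_, by linarith⟩
  rw [← sum_flux_mul_potential_eq Δt φ s s' p μw μn Aw An hschemew hschemen]
  calc (E s' - E s) / Δt = ∑ i, φ i * (F (s' i) - F (s i)) / Δt := by
        simp only [E, ← sum_sub_distrib, sum_div, mul_sub]
    _ ≤ _ := sum_le_sum fun i _ => by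
        gcongr
        · exact (hφ i).le
        · rw [hμw, hμn]
          exact freeEnergyDensity_sub_le σw σn σwn hΔt.le (hs' i) (hs i) (hne i)

/-- Original energy dissipation law for the second-order scheme
(abstract finite-dimensional formulation). -/
theorem stmt14 (N : ℕ) (hN : 1 ≤ N) (σw σn σwn Δt : ℝ)
    (hσw : 0 < σw) (hσn : 0 < σn) (hσwn : 0 < σwn) (hΔt : 0 < Δt)
    (φ : Fin N → ℝ) (hφ : ∀ i, 0 < φ i)
    (Aw An : Matrix (Fin N) (Fin N) ℝ) (hAw : Aw.PosSemidef) (hAn : An.PosSemidef)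
    (s s' p : Fin N → ℝ)
    (hs : ∀ i, s i ∈ Set.Ioo (0 : ℝ) 1) (hs' : ∀ i, s' i ∈ Set.Ioo (0 : ℝ) 1)
    (hne : ∀ i, s' i ≠ s i)
    (μw μn : Fin N → ℝ)
    (hμw : ∀ i, μw i = σw * (Hsec (s' i) (s i) - 1) + σwn * (1 - (s i + s' i) / 2)
      + Δt * (Real.log (s' i) - Real.log (s i)))
    (hμn : ∀ i, μn i = σn * (Hsec (1 - s' i) (1 - s i) - 1) + σwn * ((s i + s' i) / 2)
      + Δt * (Real.log (1 - s' i) - Real.log (1 - s i)))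
    (hschemew : ∀ i, φ i * (s' i - s i) / Δt = -(Aw.mulVec (p + μw)) i)
    (hschemen : ∀ i, φ i * ((1 - s' i) - (1 - s i)) / Δt = -(An.mulVec (p + μn)) i) :
    let F : ℝ → ℝ := fun x => σw * x * (Real.log x - 1) +
      σn * (1 - x) * (Real.log (1 - x) - 1) + σwn * x * (1 - x)
    let E : (Fin N → ℝ) → ℝ := fun v => ∑ i, φ i * F (v i)
    (E s' - E s) / Δt ≤
        -dotProduct (p + μw) (Aw.mulVec (p + μw))
          - dotProduct (p + μn) (An.mulVec (p + μn)) ∧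
      -dotProduct (p + μw) (Aw.mulVec (p + μw))
          - dotProduct (p + μn) (An.mulVec (p + μn)) ≤ 0 :=
  stmt14_general N σw σn σwn Δt hΔt φ hφ Aw An hAw hAn s s' p hs hs' hne μw μn hμw hμn hschemew
    hschemen
end
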